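/- Let k and r be rational numbers with r ≠ 0, and set m = (k/r)(r k⁴ − 5). Then the vector s = (s_0, s_1, s_2, s_3, s_4) = (1, −r k³, 2r k², −2r k, r) satisfies det X(5, m, s) = 1, i.e. it solves the generalized Pell equation |F(5,m)| = 1. -/

import Mathlib

/-!
Write `θ = m^{1/5}` and `α = 1 - r k³ θ + 2 r k² θ² - 2 r k θ³ + r θ⁴`. The choice of `m` means
`r (θ⁵ - k⁵) = -5k`, and expanding `(θ - k)⁵` with this relation gives `5k α = -r (θ - k)⁵`.
Since `N(θ - k) = m - k⁵ = -5k / r`, taking norms gives `(5k)⁵ N(α) = (5k)⁵`.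
In matrix terms the norm is the determinant and multiplication by `θ` is a twisted shift
matrix `T`, so `5k X(s) = -r (T - k)⁵` and `det (T - k) = m - k⁵`.
If `k = 0` or `r = 0` then `m = 0` and the matrix is lower unitriangular.
-/

def twistedCirc {R : Type*} [CommRing R] (n : ℕ) (M : R) (s : ℕ → R) :
    Matrix (Fin n) (Fin n) R :=
  Matrix.of fun i j =>
    if (j : ℕ) ≤ (i : ℕ) then s ((i : ℕ) - (j : ℕ)) else M * s (n + (i : ℕ) - (j : ℕ))

section
variable {R : Type*} [CommRing R] (n : ℕ) (M : R)

theorem det_twistedCirc_zero (s : ℕ → R) : (twistedCirc n 0 s).det = s 0 ^ n := by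
  rw [Matrix.det_of_isLowerTriangular _ fun i j (hij : i < j) => by simp [twistedCirc, hij]]
  simp [twistedCirc]

/-- Multiplication by `M^{1/n}`; for `n ≥ 2` it is `twistedCirc n M (Pi.single 1 1)`. -/
def twistedShift : Matrix (Fin n) (Fin n) R :=
  Matrix.of fun i j => if (i : ℕ) = j + 1 then 1 else if (i : ℕ) = 0 ∧ (j : ℕ) = n - 1 then M else 0

/-- The coefficient vector of `M^{1/n} α`, given that of `α`. -/
def shiftCoeffs (s : ℕ → R) : ℕ → R := fun i => if i = 0 then M * s (n - 1) else s (i - 1)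

variable {n M}

theorem twistedCirc_congr {s t : ℕ → R} (h : ∀ i < n, s i = t i) :
    twistedCirc n M s = twistedCirc n M t := by
  ext i j
  simp only [twistedCirc, Matrix.of_apply]
  split_ifs <;> rw [h] <;> omega

theorem smul_twistedCirc (c : R) (s : ℕ → R) :
    c • twistedCirc n M s = twistedCirc n M (c • s) := by
  ext i j
  simp only [twistedCirc, Matrix.smul_apply, Matrix.of_apply, Pi.smul_apply, smul_eq_mul]
  split_ifs <;> ring

theorem twistedCirc_sub (s t : ℕ → R) :
    twistedCirc n M (s - t) = twistedCirc n M s - twistedCirc n M t := by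
  ext i j
  simp only [twistedCirc, Matrix.sub_apply, Matrix.of_apply, Pi.sub_apply]
  split_ifs <;> ring

theorem twistedCirc_single_zero : twistedCirc n M (Pi.single 0 1) = 1 := by
  ext i j
  simp only [twistedCirc, Matrix.of_apply, Matrix.one_apply]
  split_ifs <;> simp [Pi.single_apply] <;> omega

theorem twistedShift_mul_twistedCirc (s : ℕ → R) :
    twistedShift n M * twistedCirc n M s = twistedCirc n M (shiftCoeffs n M s) := by
  ext i j
  rw [Matrix.mul_apply]
  by_cases hi : (i : ℕ) = 0
  · rw [Finset.sum_eq_single ⟨n - 1, by omega⟩]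
    · have hT : twistedShift n M i ⟨n - 1, by omega⟩ = M := by
        simp [twistedShift, hi]
      have hX : twistedCirc n M s ⟨n - 1, by omega⟩ j = s (n - 1 - j) := if_pos (by simp; omega)
      rw [hT, hX]
      simp only [twistedCirc, shiftCoeffs, Matrix.of_apply, hi]
      split_ifs <;> first | omega | (congr 2; omega)
    · intro l _ hl
      have : (l : ℕ) ≠ n - 1 := fun h => hl (Fin.ext h)
      simp [twistedShift, hi, this]
    · simp
  · rw [Finset.sum_eq_single ⟨i - 1, by omega⟩]
    · have hT : twistedShift n M i ⟨i - 1, by omega⟩ = 1 := by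
        simp [twistedShift]; omega
      rw [hT, one_mul]
      simp only [twistedCirc, shiftCoeffs, Matrix.of_apply]
      split_ifs <;> first | omega | (congr 1; omega) | (congr 2; omega)
    · intro l _ hl
      have : (i : ℕ) ≠ l + 1 := fun h => hl (Fin.ext (by simp; omega))
      simp [twistedShift, hi, this]
    · simp

theorem twistedShift_sub_smul_mul_twistedCirc (c : R) (s : ℕ → R) :
    (twistedShift n M - c • 1) * twistedCirc n M s =
      twistedCirc n M (shiftCoeffs n M s - c • s) := by
  rw [sub_mul, smul_mul_assoc, one_mul, twistedShift_mul_twistedCirc, smul_twistedCirc,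
    twistedCirc_sub]
end

section
variable {R : Type*} [CommRing R]

def pellVector (k r : R) : ℕ → R := fun i =>
  match i with
  | 0 => 1
  | 1 => -(r * k ^ 3)
  | 2 => 2 * r * k ^ 2
  | 3 => -(2 * r * k)
  | 4 => r
  | _ + 5 => 0 -- not `_`: an identical `match` in the main theorem would reuse this matcher

theorem smul_twistedCirc_pellVector {M k r : R} (hM : r * M = r * k ^ 5 - 5 * k) :
    (5 * k) • twistedCirc 5 M (pellVector k r) = -r • (twistedShift 5 M - k • 1) ^ 5 := by
  have hone : (twistedShift 5 M - k • 1) ^ 5 =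
      (twistedShift 5 M - k • 1) ^ 5 * twistedCirc 5 M (Pi.single 0 1) := by
    rw [twistedCirc_single_zero, mul_one]
  rw [hone]
  simp only [pow_succ, pow_zero, one_mul, mul_assoc, twistedShift_sub_smul_mul_twistedCirc,
    smul_twistedCirc]
  refine twistedCirc_congr fun i hi => ?_
  interval_cases i
  · simp [shiftCoeffs, pellVector]
    linear_combination hM
  all_goals simp [shiftCoeffs, pellVector]; ring

theorem det_twistedShift_five_sub_smul (M k : R) :
    (twistedShift 5 M - k • 1).det = M - k ^ 5 := by
  have : twistedShift 5 M - k • 1 =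
      !![-k, 0, 0, 0, M; 1, -k, 0, 0, 0; 0, 1, -k, 0, 0; 0, 0, 1, -k, 0; 0, 0, 0, 1, -k] := by
    ext i j
    fin_cases i <;> fin_cases j <;> simp [twistedShift]
  rw [this]
  simp [Matrix.det_succ_row_zero, Fin.sum_univ_succ, Fin.succAbove]
  ring
end

theorem pell5_parametrization
    (k r : ℚ) (m : ℚ) (hm : m = (k / r) * (r * k ^ 4 - 5)) :
    (twistedCirc 5 m (fun i =>
      match i with
      | 0 => 1
      | 1 => -(r * k ^ 3)
      | 2 => 2 * r * k ^ 2
      | 3 => -(2 * r * k)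
      | 4 => r
      | _ => 0)).det = 1 := by
  rw [twistedCirc_congr (t := pellVector k r) fun i hi => by interval_cases i <;> rfl]
  by_cases hkr : k = 0 ∨ r = 0
  · have hm0 : m = 0 := by rcases hkr with rfl | rfl <;> simp [hm]
    subst hm0
    rw [det_twistedCirc_zero, pellVector, one_pow]
  · push Not at hkr
    obtain ⟨hk, hr⟩ := hkr
    have hM : r * m = r * k ^ 5 - 5 * k := by rw [hm]; field_simp
    have key := congrArg Matrix.det (smul_twistedCirc_pellVector hM)
    rw [Matrix.det_smul, Matrix.det_smul, Matrix.det_pow, det_twistedShift_five_sub_smul,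
      Fintype.card_fin, ← mul_pow, show -r * (m - k ^ 5) = 5 * k by linear_combination -hM] at key
    exact mul_left_cancel₀ (pow_ne_zero 5 (by positivity)) (key.trans (mul_one _).symm)
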